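/- arXiv:2406.09083 — 2 statements merged into one kernel-verified Lean document; each statement's English description precedes it below -/
import Mathlib

section
/- Let l, r and n be positive integers and let P = [x_1,...,x_l | y_1,...,y_r]_n be an Octopus position. If l > r and Left is the first player, then Left has a winning strategy; symmetrically, if l < r and Right is the first player, then Right has a winning strategy. -/
namespace Octopus

/-- An Octopus position: the multiset of Left's hand values and the
multiset of Right's hand values. -/
abbrev Pos : Type := Multiset ℕ × Multiset ℕ

/-- All hand values lie in `{1, ..., n}`, where `n` is the finger count. -/
def Valid (n : ℕ) (P : Pos) : Prop :=
  (∀ x ∈ P.1, 1 ≤ x ∧ x ≤ n) ∧ (∀ y ∈ P.2, 1 ≤ y ∧ y ≤ n)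

/-- A move of Left with finger count `n`: Left chooses an attacking hand `x` in
her multiset and a target hand `y` in Right's multiset; that copy of `y` is
replaced by `x + y`, or removed from play if `x + y > n`. -/
def LeftMove (n : ℕ) (P Q : Pos) : Prop :=
  ∃ x ∈ P.1, ∃ y ∈ P.2,
    Q.1 = P.1 ∧
    Q.2 = if x + y ≤ n then (x + y) ::ₘ P.2.erase y else P.2.erase y

/-- A move of Right with finger count `n`: Right chooses an attacking hand `y` in
his multiset and a target hand `x` in Left's multiset; that copy of `x` is
replaced by `x + y`, or removed from play if `x + y > n`. -/
def RightMove (n : ℕ) (P Q : Pos) : Prop :=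
  ∃ x ∈ P.1, ∃ y ∈ P.2,
    Q.2 = P.2 ∧
    Q.1 = if x + y ≤ n then (x + y) ::ₘ P.1.erase x else P.1.erase x

/-- `LeftWinsFirst n P`: Left, moving first from `P`, has a winning strategy
(normal play: a player with no move on their turn loses). -/
inductive LeftWinsFirst (n : ℕ) : Pos → Prop
  | intro (P Q : Pos) (hmove : LeftMove n P Q)
      (hwin : ∀ R, RightMove n Q R → LeftWinsFirst n R) : LeftWinsFirst n P

/-- `RightWinsFirst n P`: Right, moving first from `P`, has a winning strategy. -/
inductive RightWinsFirst (n : ℕ) : Pos → Prop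
  | intro (P Q : Pos) (hmove : RightMove n P Q)
      (hwin : ∀ R, LeftMove n Q R → RightWinsFirst n R) : RightWinsFirst n P

/-- Left, moving second from `P`, has a winning strategy. -/
def LeftWinsSecond (n : ℕ) (P : Pos) : Prop :=
  ∀ Q, RightMove n P Q → LeftWinsFirst n Q

/-- Right, moving second from `P`, has a winning strategy. -/
def RightWinsSecond (n : ℕ) (P : Pos) : Prop :=
  ∀ Q, LeftMove n P Q → RightWinsFirst n Q

/-- `N`-position: whichever player moves first wins. -/
def NPos (n : ℕ) (P : Pos) : Prop := LeftWinsFirst n P ∧ RightWinsFirst n P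

/-- `P`-position: whichever player moves second wins. -/
def PPos (n : ℕ) (P : Pos) : Prop := LeftWinsSecond n P ∧ RightWinsSecond n P

/-- `L`-position: Left wins whoever moves first. -/
def LPos (n : ℕ) (P : Pos) : Prop := LeftWinsFirst n P ∧ LeftWinsSecond n P

/-- `R`-position: Right wins whoever moves first. -/
def RPos (n : ℕ) (P : Pos) : Prop := RightWinsFirst n P ∧ RightWinsSecond n P

/-- The position `[1^a, 2^b | 1^c, 2^d]` (used with finger count 2). -/
def two (a b c d : ℕ) : Pos :=
  (Multiset.replicate a 1 + Multiset.replicate b 2,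
   Multiset.replicate c 1 + Multiset.replicate d 2)

/-! ### Auxiliary machinery for the proof of `moreHands` -/

/-- Remaining capacity of a single hand. -/
def pot (n a : ℕ) : ℕ := n + 1 - a

/-- Potential of a position: total remaining capacity.  Every move strictly
decreases it (given validity), so it serves as an induction measure. -/
def S (n : ℕ) (P : Pos) : ℕ :=
  (P.1.map (pot n)).sum + (P.2.map (pot n)).sum

lemma sum_map_erase {Y : Multiset ℕ} {y : ℕ} (hy : y ∈ Y) (f : ℕ → ℕ) :
    (Y.map f).sum = f y + ((Y.erase y).map f).sum := by
  conv_lhs => rw [← Multiset.cons_erase hy]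
  rw [Multiset.map_cons, Multiset.sum_cons]

lemma S_erase_right {n : ℕ} {X Y : Multiset ℕ} {y : ℕ} (hy : y ∈ Y) (hyn : y ≤ n) :
    S n (X, Y.erase y) < S n (X, Y) := by
  unfold S
  dsimp only
  rw [sum_map_erase hy (pot n)]
  unfold pot
  omega

lemma S_replace_right {n : ℕ} {X Y : Multiset ℕ} {x y : ℕ} (hy : y ∈ Y) (hyn : y ≤ n)
    (hx : 1 ≤ x) : S n (X, (x + y) ::ₘ Y.erase y) < S n (X, Y) := by
  unfold S
  dsimp only
  rw [sum_map_erase hy (pot n), Multiset.map_cons, Multiset.sum_cons]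
  unfold pot
  omega

lemma S_erase_left {n : ℕ} {X Y : Multiset ℕ} {x : ℕ} (hx : x ∈ X) (hxn : x ≤ n) :
    S n (X.erase x, Y) < S n (X, Y) := by
  unfold S
  dsimp only
  rw [sum_map_erase hx (pot n)]
  unfold pot
  omega

lemma S_replace_left {n : ℕ} {X Y : Multiset ℕ} {x y : ℕ} (hx : x ∈ X) (hxn : x ≤ n)
    (hy : 1 ≤ y) : S n ((x + y) ::ₘ X.erase x, Y) < S n (X, Y) := by
  unfold S
  dsimp only
  rw [sum_map_erase hx (pot n), Multiset.map_cons, Multiset.sum_cons]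
  unfold pot
  omega

lemma exists_max (X : Multiset ℕ) (h : X ≠ 0) : ∃ M ∈ X, ∀ x ∈ X, x ≤ M := by
  induction X using Multiset.induction with
  | empty => exact absurd rfl h
  | cons a X ih =>
    rcases eq_or_ne X 0 with rfl | hX
    · exact ⟨a, Multiset.mem_cons_self a 0, by simp⟩
    · obtain ⟨M, hM, hmax⟩ := ih hX
      rcases le_total a M with h1 | h1
      · refine ⟨M, Multiset.mem_cons_of_mem hM, ?_⟩
        intro x hx
        rcases Multiset.mem_cons.1 hx with rfl | hx
        · exact h1
        · exact hmax x hx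
      · refine ⟨a, Multiset.mem_cons_self a X, ?_⟩
        intro x hx
        rcases Multiset.mem_cons.1 hx with rfl | hx
        · exact le_rfl
        · exact (hmax x hx).trans h1

/-- Main induction: if Left has strictly more hands (and Right has at least one),
Left wins moving first; moreover Left wins moving second if additionally the
position is safe (no removal possible) or Left is ahead by at least two hands. -/
lemma key (n : ℕ) : ∀ s : ℕ, ∀ P : Pos, Valid n P → S n P < s →
    ((0 < Multiset.card P.2 → Multiset.card P.2 < Multiset.card P.1 →
        LeftWinsFirst n P) ∧
     (((∀ x ∈ P.1, ∀ y ∈ P.2, x + y ≤ n) ∧ Multiset.card P.2 < Multiset.card P.1) ∨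
        Multiset.card P.2 + 2 ≤ Multiset.card P.1 → LeftWinsSecond n P)) := by
  intro s
  induction s with
  | zero => intro P _ h; omega
  | succ s ih =>
    intro P hV hS
    obtain ⟨X, Y⟩ := P
    have hVX := hV.1
    have hVY := hV.2
    dsimp only at hVX hVY hS ⊢
    -- induction hypotheses, repackaged
    have A' : ∀ Q : Pos, Valid n Q → S n Q < S n (X, Y) →
        0 < Multiset.card Q.2 → Multiset.card Q.2 < Multiset.card Q.1 →
        LeftWinsFirst n Q := by
      intro Q hQ hlt h1 h2
      exact (ih Q hQ (by omega)).1 h1 h2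
    have B' : ∀ Q : Pos, Valid n Q → S n Q < S n (X, Y) →
        ((∀ x ∈ Q.1, ∀ y ∈ Q.2, x + y ≤ n) ∧ Multiset.card Q.2 < Multiset.card Q.1) ∨
          Multiset.card Q.2 + 2 ≤ Multiset.card Q.1 →
        LeftWinsSecond n Q := by
      intro Q hQ hlt hd
      exact (ih Q hQ (by omega)).2 hd
    -- the "moving second" claim
    have B : ((∀ x ∈ X, ∀ y ∈ Y, x + y ≤ n) ∧ Multiset.card Y < Multiset.card X) ∨
        Multiset.card Y + 2 ≤ Multiset.card X → LeftWinsSecond n (X, Y) := by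
      intro hd R hR
      obtain ⟨x, hx, y, hy, hR2, hR1⟩ := hR
      dsimp only at hx hy hR1 hR2
      obtain ⟨R1, R2⟩ := R
      dsimp only at hR1 hR2
      subst R2
      have hx1 : 1 ≤ x := (hVX x hx).1
      have hxn : x ≤ n := (hVX x hx).2
      have hy1 : 1 ≤ y := (hVY y hy).1
      have hyn : y ≤ n := (hVY y hy).2
      have hYpos : 0 < Multiset.card Y := Multiset.card_pos.2 (fun h0 => by
        rw [h0] at hy; exact absurd hy (Multiset.notMem_zero y))
      by_cases hle : x + y ≤ n
      · rw [if_pos hle] at hR1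
        subst hR1
        apply A' ((x + y) ::ₘ X.erase x, Y)
        · constructor
          · intro a ha
            dsimp only at ha
            rcases Multiset.mem_cons.1 ha with rfl | ha
            · omega
            · exact hVX a (Multiset.mem_of_mem_erase ha)
          · exact hVY
        · exact S_replace_left hx hxn hy1
        · exact hYpos
        · dsimp only
          rw [Multiset.card_cons, Multiset.card_erase_of_mem hx]
          simp only [Nat.pred_eq_sub_one]
          have hXpos : 0 < Multiset.card X := Multiset.card_pos.2 (fun h0 => by
            rw [h0] at hx; exact absurd hx (Multiset.notMem_zero x))
          rcases hd with ⟨_, h⟩ | h <;> omega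
      · rw [if_neg hle] at hR1
        subst hR1
        rcases hd with ⟨hsafe, _⟩ | hcard
        · exact absurd (hsafe x hx y hy) hle
        · apply A' (X.erase x, Y)
          · exact ⟨fun a ha => hVX a (Multiset.mem_of_mem_erase ha), hVY⟩
          · exact S_erase_left hx hxn
          · exact hYpos
          · dsimp only
            rw [Multiset.card_erase_of_mem hx]
            simp only [Nat.pred_eq_sub_one]
            omega
    refine ⟨?_, B⟩
    -- the "moving first" claim
    intro hYpos hcard
    have hXne : X ≠ 0 := fun h0 => by simp [h0] at hcard
    have hYne : Y ≠ 0 := Multiset.card_pos.1 hYpos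
    by_cases hsafe : ∀ x ∈ X, ∀ y ∈ Y, x + y ≤ n
    · -- no removal available: the position is safe
      obtain ⟨M, hM, hMmax⟩ := exists_max X hXne
      obtain ⟨ym, hym, hymmax⟩ := exists_max Y hYne
      have hM1 : 1 ≤ M := (hVX M hM).1
      have hym1 : 1 ≤ ym := (hVY ym hym).1
      by_cases h2a : ∃ x ∈ X, ∃ y ∈ Y, M + (x + y) ≤ n
      · -- Left can move so that the result is still safe
        obtain ⟨x, hx, y, hy, hxy⟩ := h2a
        have hle : x + y ≤ n := by omega
        refine LeftWinsFirst.intro _ (X, (x + y) ::ₘ Y.erase y)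
          ⟨x, hx, y, hy, rfl, by dsimp only; rw [if_pos hle]⟩ ?_
        apply B' (X, (x + y) ::ₘ Y.erase y)
        · refine ⟨hVX, ?_⟩
          intro b hb
          dsimp only at hb
          rcases Multiset.mem_cons.1 hb with rfl | hb
          · have := (hVX x hx).1; omega
          · exact hVY b (Multiset.mem_of_mem_erase hb)
        · exact S_replace_right hy ((hVY y hy).2) ((hVX x hx).1)
        · left
          constructor
          · intro a ha b hb
            dsimp only at ha hb
            rcases Multiset.mem_cons.1 hb with rfl | hb
            · have := hMmax a ha; omega
            · exact hsafe a ha b (Multiset.mem_of_mem_erase hb)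
          · dsimp only
            rw [Multiset.card_cons, Multiset.card_erase_of_mem hy]
            simp only [Nat.pred_eq_sub_one]
            omega
      · -- every Left hand can remove the newly created hand `M + ym`
        push_neg at h2a
        have hvn : M + ym ≤ n := hsafe M hM ym hym
        refine LeftWinsFirst.intro _ (X, (M + ym) ::ₘ Y.erase ym)
          ⟨M, hM, ym, hym, rfl, by dsimp only; rw [if_pos hvn]⟩ ?_
        intro R hR
        obtain ⟨x0, hx0, y', hy', hR2, hR1⟩ := hR
        dsimp only at hx0 hy' hR1 hR2
        obtain ⟨R1, R2⟩ := R
        dsimp only at hR1 hR2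
        subst hR2
        have hx0n : x0 ≤ n := (hVX x0 hx0).2
        have hy'1 : 1 ≤ y' := by
          rcases Multiset.mem_cons.1 hy' with rfl | hb
          · omega
          · exact (hVY y' (Multiset.mem_of_mem_erase hb)).1
        by_cases hg : x0 + y' ≤ n
        · -- Right merely grows one of Left's hands
          rw [if_pos hg] at hR1
          subst hR1
          apply A' ((x0 + y') ::ₘ X.erase x0, (M + ym) ::ₘ Y.erase ym)
          · constructor
            · intro a ha
              dsimp only at ha
              rcases Multiset.mem_cons.1 ha with rfl | ha
              · have := (hVX x0 hx0).1; omega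
              · exact hVX a (Multiset.mem_of_mem_erase ha)
            · intro b hb
              dsimp only at hb
              rcases Multiset.mem_cons.1 hb with rfl | hb
              · omega
              · exact hVY b (Multiset.mem_of_mem_erase hb)
          · calc S n ((x0 + y') ::ₘ X.erase x0, (M + ym) ::ₘ Y.erase ym)
                < S n (X, (M + ym) ::ₘ Y.erase ym) := S_replace_left hx0 hx0n hy'1
              _ < S n (X, Y) := S_replace_right hym ((hVY ym hym).2) hM1
          · dsimp only
            rw [Multiset.card_cons, Multiset.card_erase_of_mem hym]
            simp only [Nat.pred_eq_sub_one]
            omega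
          · dsimp only
            rw [Multiset.card_cons, Multiset.card_erase_of_mem hym,
              Multiset.card_cons, Multiset.card_erase_of_mem hx0]
            simp only [Nat.pred_eq_sub_one]
            omega
        · -- Right removed a Left hand; Left answers by removing `M + ym`
          rw [if_neg hg] at hR1
          subst hR1
          have hXe : X.erase x0 ≠ 0 := by
            intro h0
            have := Multiset.card_erase_of_mem hx0
            rw [h0] at this
            simp at this
            omega
          obtain ⟨x1, hx1⟩ := Multiset.exists_mem_of_ne_zero hXe
          have hx1X : x1 ∈ X := Multiset.mem_of_mem_erase hx1
          have hbig : ¬ x1 + (M + ym) ≤ n := by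
            have := h2a x1 hx1X ym hym
            omega
          refine LeftWinsFirst.intro _ (X.erase x0, Y.erase ym)
            ⟨x1, hx1, M + ym, Multiset.mem_cons_self _ _, rfl, ?_⟩ ?_
          · dsimp only
            rw [if_neg hbig, Multiset.erase_cons_head]
          · apply B' (X.erase x0, Y.erase ym)
            · exact ⟨fun a ha => hVX a (Multiset.mem_of_mem_erase ha),
                fun b hb => hVY b (Multiset.mem_of_mem_erase hb)⟩
            · calc S n (X.erase x0, Y.erase ym)
                  < S n (X.erase x0, Y) := S_erase_right hym ((hVY ym hym).2)
                _ < S n (X, Y) := S_erase_left hx0 hx0n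
            · left
              constructor
              · intro a ha b hb
                exact hsafe a (Multiset.mem_of_mem_erase ha) b (Multiset.mem_of_mem_erase hb)
              · dsimp only
                rw [Multiset.card_erase_of_mem hx0, Multiset.card_erase_of_mem hym]
                simp only [Nat.pred_eq_sub_one]
                omega
    · -- Left can remove a Right hand outright
      push_neg at hsafe
      obtain ⟨x, hx, y, hy, hgt⟩ := hsafe
      refine LeftWinsFirst.intro _ (X, Y.erase y)
        ⟨x, hx, y, hy, rfl, by dsimp only; rw [if_neg (by omega)]⟩ ?_
      apply B' (X, Y.erase y)
      · exact ⟨hVX, fun b hb => hVY b (Multiset.mem_of_mem_erase hb)⟩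
      · exact S_erase_right hy ((hVY y hy).2)
      · right
        dsimp only
        rw [Multiset.card_erase_of_mem hy]
        simp only [Nat.pred_eq_sub_one]
        omega

lemma leftMove_swap {n : ℕ} {P Q : Pos} (h : LeftMove n P Q) :
    RightMove n (P.2, P.1) (Q.2, Q.1) := by
  obtain ⟨x, hx, y, hy, h1, h2⟩ := h
  exact ⟨y, hy, x, hx, h1, by rw [h2, Nat.add_comm y x]⟩

lemma rightMove_swap {n : ℕ} {P Q : Pos} (h : RightMove n P Q) :
    LeftMove n (P.2, P.1) (Q.2, Q.1) := by
  obtain ⟨x, hx, y, hy, h2, h1⟩ := h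
  exact ⟨y, hy, x, hx, h2, by rw [h1, Nat.add_comm y x]⟩

lemma lwf_swap {n : ℕ} {P : Pos} (h : LeftWinsFirst n P) :
    RightWinsFirst n (P.2, P.1) := by
  induction h with
  | intro P Q hmove hwin ih =>
    exact RightWinsFirst.intro _ (Q.2, Q.1) (leftMove_swap hmove)
      (fun R hR => ih (R.2, R.1) (leftMove_swap hR))

/-- the player with strictly more hands wins moving first. -/
theorem moreHands (n : ℕ) (hn : 0 < n) (P : Pos) (hP : Valid n P)
    (hl : 0 < Multiset.card P.1) (hr : 0 < Multiset.card P.2) :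
    (Multiset.card P.2 < Multiset.card P.1 → LeftWinsFirst n P) ∧
    (Multiset.card P.1 < Multiset.card P.2 → RightWinsFirst n P) := by
  constructor
  · intro h
    exact (key n (S n P + 1) P hP (Nat.lt_succ_self _)).1 hr h
  · intro h
    have hP' : Valid n (P.2, P.1) := ⟨hP.2, hP.1⟩
    have := (key n (S n (P.2, P.1) + 1) (P.2, P.1) hP' (Nat.lt_succ_self _)).1 hl h
    exact lwf_swap this

end Octopus
end

section
/- Let a, b, c, d be nonnegative integers with a + b = c + d + 1. The Octopus position [1^a, 2^b | 1^c, 2^d] with finger count 2 is: a P-position if c = d = 0; an N-position if d = 0, b > 0 and a is odd; and an L-position otherwise. -/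
namespace Octopus

/-! ### Auxiliary development -/

/-- Closed-form condition for the player owning hands `(a,b)` (as `1`s and `2`s)
to win moving first against `(c,d)`, with finger count `2`. -/
def lf (a b c d : ℕ) : Prop :=
  0 < c + d ∧ (c + d < a + b ∨
    (a + b = c + d ∧ ¬(d = 0 ∧ a % 2 = 1)) ∨
    (a + b + 1 = c + d ∧ b = 0 ∧ c % 2 = 1 ∧ 0 < d))

lemma mem_rep {x a b : ℕ} :
    x ∈ Multiset.replicate a 1 + Multiset.replicate b 2 ↔ (x = 1 ∧ 0 < a) ∨ (x = 2 ∧ 0 < b) := by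
  simp [Multiset.mem_replicate]
  omega

lemma erase1 {a : ℕ} (b : ℕ) (h : 0 < a) :
    (Multiset.replicate a 1 + Multiset.replicate b 2).erase 1 =
      Multiset.replicate (a-1) 1 + Multiset.replicate b 2 := by
  obtain ⟨a', rfl⟩ : ∃ a', a = a' + 1 := ⟨a - 1, by omega⟩
  rw [Multiset.replicate_succ, Multiset.cons_add, Multiset.erase_cons_head]
  simp

lemma erase2 (a : ℕ) {b : ℕ} (h : 0 < b) :
    (Multiset.replicate a 1 + Multiset.replicate b 2).erase 2 =
      Multiset.replicate a 1 + Multiset.replicate (b-1) 2 := by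
  obtain ⟨b', rfl⟩ : ∃ b', b = b' + 1 := ⟨b - 1, by omega⟩
  rw [Multiset.erase_add_right_pos _ (by simp [Multiset.mem_replicate]),
    Multiset.replicate_succ, Multiset.erase_cons_head]
  simp

lemma upg_eq {c : ℕ} (d : ℕ) (hc : 0 < c) :
    (2 : ℕ) ::ₘ (Multiset.replicate c 1 + Multiset.replicate d 2).erase 1 =
      Multiset.replicate (c-1) 1 + Multiset.replicate (d+1) 2 := by
  rw [erase1 _ hc, Multiset.replicate_succ, Multiset.add_cons]

lemma leftMove_upgrade {a c : ℕ} (b d : ℕ) (ha : 0 < a) (hc : 0 < c) :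
    LeftMove 2 (two a b c d) (two a b (c-1) (d+1)) := by
  refine ⟨1, mem_rep.mpr (Or.inl ⟨rfl, ha⟩), 1, mem_rep.mpr (Or.inl ⟨rfl, hc⟩), rfl, ?_⟩
  rw [if_pos (by norm_num : (1:ℕ) + 1 ≤ 2)]
  exact (upg_eq d hc).symm

lemma leftMove_kill2 {a b d : ℕ} (c : ℕ) (hab : 0 < a ∨ 0 < b) (hd : 0 < d) :
    LeftMove 2 (two a b c d) (two a b c (d-1)) := by
  rcases hab with ha | hb
  · refine ⟨1, mem_rep.mpr (Or.inl ⟨rfl, ha⟩), 2, mem_rep.mpr (Or.inr ⟨rfl, hd⟩), rfl, ?_⟩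
    rw [if_neg (by norm_num : ¬ (1:ℕ) + 2 ≤ 2)]
    exact (erase2 c hd).symm
  · refine ⟨2, mem_rep.mpr (Or.inr ⟨rfl, hb⟩), 2, mem_rep.mpr (Or.inr ⟨rfl, hd⟩), rfl, ?_⟩
    rw [if_neg (by norm_num : ¬ (2:ℕ) + 2 ≤ 2)]
    exact (erase2 c hd).symm

lemma leftMove_kill1 {b c : ℕ} (a d : ℕ) (hb : 0 < b) (hc : 0 < c) :
    LeftMove 2 (two a b c d) (two a b (c-1) d) := by
  refine ⟨2, mem_rep.mpr (Or.inr ⟨rfl, hb⟩), 1, mem_rep.mpr (Or.inl ⟨rfl, hc⟩), rfl, ?_⟩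
  rw [if_neg (by norm_num : ¬ (2:ℕ) + 1 ≤ 2)]
  exact (erase1 d hc).symm

lemma leftMove_cases {a b c d : ℕ} {Q : Pos} (hQ : LeftMove 2 (two a b c d) Q) :
    (0 < a ∧ 0 < c ∧ Q = two a b (c-1) (d+1)) ∨
    ((0 < a ∨ 0 < b) ∧ 0 < d ∧ Q = two a b c (d-1)) ∨
    (0 < b ∧ 0 < c ∧ Q = two a b (c-1) d) := by
  obtain ⟨x, hx, y, hy, h1, h2⟩ := hQ
  rw [show (two a b c d).1 = Multiset.replicate a 1 + Multiset.replicate b 2 from rfl,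
    mem_rep] at hx
  rw [show (two a b c d).2 = Multiset.replicate c 1 + Multiset.replicate d 2 from rfl,
    mem_rep] at hy
  have hQeq : Q = (Q.1, Q.2) := rfl
  simp only [two] at h1 h2
  rcases hx with ⟨rfl, ha⟩ | ⟨rfl, hb⟩ <;> rcases hy with ⟨rfl, hc⟩ | ⟨rfl, hd⟩
  · refine Or.inl ⟨ha, hc, ?_⟩
    rw [if_pos (by norm_num : (1:ℕ) + 1 ≤ 2), show ((1:ℕ)+1) = 2 from rfl,
      upg_eq d hc] at h2
    rw [hQeq, h1, h2]; rfl
  · refine Or.inr (Or.inl ⟨Or.inl ha, hd, ?_⟩)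
    rw [if_neg (by norm_num : ¬ (1:ℕ) + 2 ≤ 2), erase2 c hd] at h2
    rw [hQeq, h1, h2]; rfl
  · refine Or.inr (Or.inr ⟨hb, hc, ?_⟩)
    rw [if_neg (by norm_num : ¬ (2:ℕ) + 1 ≤ 2), erase1 d hc] at h2
    rw [hQeq, h1, h2]; rfl
  · refine Or.inr (Or.inl ⟨Or.inr hb, hd, ?_⟩)
    rw [if_neg (by norm_num : ¬ (2:ℕ) + 2 ≤ 2), erase2 c hd] at h2
    rw [hQeq, h1, h2]; rfl

lemma rightMove_swap_s6 {n : ℕ} {P Q : Pos} : RightMove n P Q ↔ LeftMove n P.swap Q.swap := by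
  constructor
  · rintro ⟨x, hx, y, hy, h1, h2⟩
    exact ⟨y, hy, x, hx, h1, by rw [Nat.add_comm y x]; exact h2⟩
  · rintro ⟨y, hy, x, hx, h1, h2⟩
    exact ⟨x, hx, y, hy, h1, by rw [Nat.add_comm x y]; exact h2⟩

lemma rightMove_cases {a b c d : ℕ} {Q : Pos} (hQ : RightMove 2 (two a b c d) Q) :
    (0 < c ∧ 0 < a ∧ Q = two (a-1) (b+1) c d) ∨
    ((0 < c ∨ 0 < d) ∧ 0 < b ∧ Q = two a (b-1) c d) ∨
    (0 < d ∧ 0 < a ∧ Q = two (a-1) b c d) := by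
  have h : LeftMove 2 (two c d a b) Q.swap := rightMove_swap_s6.mp hQ
  have hs : ∀ R : Pos, Q.swap = R → Q = R.swap := by rintro R rfl; rfl
  rcases leftMove_cases h with ⟨hc, ha, he⟩ | ⟨hcd, hb, he⟩ | ⟨hd, ha, he⟩
  · exact Or.inl ⟨hc, ha, hs _ he⟩
  · exact Or.inr (Or.inl ⟨hcd, hb, hs _ he⟩)
  · exact Or.inr (Or.inr ⟨hd, ha, hs _ he⟩)

lemma rwf_of_swap {n : ℕ} : ∀ {P : Pos}, LeftWinsFirst n P → RightWinsFirst n P.swap := by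
  intro P h
  induction h with
  | intro P Q hmove hwin ih =>
    refine ⟨P.swap, Q.swap, rightMove_swap_s6.mpr hmove, fun R hR => ?_⟩
    exact ih R.swap (rightMove_swap_s6.mpr hR)

lemma lwf_of_swap {n : ℕ} : ∀ {P : Pos}, RightWinsFirst n P → LeftWinsFirst n P.swap := by
  intro P h
  induction h with
  | intro P Q hmove hwin ih =>
    refine ⟨P.swap, Q.swap, rightMove_swap_s6.mp hmove, fun R hR => ?_⟩
    exact ih R.swap (rightMove_swap_s6.mp hR)

/-- Strategy fact A: from an `lf` position some Left move reaches a `¬lf`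
position for the opponent. -/
lemma stratA {a b c d : ℕ} (h : lf a b c d) :
    (0 < a ∧ 0 < c ∧ ¬ lf (c-1) (d+1) a b) ∨
    ((0 < a ∨ 0 < b) ∧ 0 < d ∧ ¬ lf c (d-1) a b) ∨
    (0 < b ∧ 0 < c ∧ ¬ lf (c-1) d a b) := by
  unfold lf at *
  omega

/-- Strategy fact B: from a `¬lf`-for-the-opponent position, every Right move
reaches an `lf` position for Left. -/
lemma stratB {a b c d : ℕ} (h : ¬ lf c d a b) :
    (0 < c → 0 < a → lf (a-1) (b+1) c d) ∧
    ((0 < c ∨ 0 < d) → 0 < b → lf a (b-1) c d) ∧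
    (0 < d → 0 < a → lf (a-1) b c d) := by
  unfold lf at *
  omega

lemma main : ∀ m a b c d : ℕ, 2*a + b + 2*c + d ≤ m →
    (lf a b c d → LeftWinsFirst 2 (two a b c d)) ∧
    (¬ lf c d a b → LeftWinsSecond 2 (two a b c d)) := by
  intro m
  induction m with
  | zero =>
    intro a b c d hm
    constructor
    · intro hl; exact absurd hl (by unfold lf; omega)
    · intro _ Q hQ
      rcases rightMove_cases hQ with ⟨_, ha, _⟩ | ⟨_, hb, _⟩ | ⟨_, ha, _⟩ <;> omega
  | succ m ih =>
    intro a b c d hm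
    constructor
    · intro hl
      rcases stratA hl with ⟨ha, hc, hn⟩ | ⟨hab, hd, hn⟩ | ⟨hb, hc, hn⟩
      · exact ⟨_, _, leftMove_upgrade b d ha hc,
          (ih a b (c-1) (d+1) (by omega)).2 hn⟩
      · exact ⟨_, _, leftMove_kill2 c hab hd,
          (ih a b c (d-1) (by omega)).2 hn⟩
      · exact ⟨_, _, leftMove_kill1 a d hb hc,
          (ih a b (c-1) d (by omega)).2 hn⟩
    · intro hn Q hQ
      obtain ⟨hB1, hB2, hB3⟩ := stratB hn
      rcases rightMove_cases hQ with ⟨hc, ha, rfl⟩ | ⟨hcd, hb, rfl⟩ | ⟨hd, ha, rfl⟩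
      · exact (ih (a-1) (b+1) c d (by omega)).1 (hB1 hc ha)
      · exact (ih a (b-1) c d (by omega)).1 (hB2 hcd hb)
      · exact (ih (a-1) b c d (by omega)).1 (hB3 hd ha)

lemma main' (a b c d : ℕ) :
    (lf a b c d → LeftWinsFirst 2 (two a b c d)) ∧
    (¬ lf c d a b → LeftWinsSecond 2 (two a b c d)) :=
  main (2*a + b + 2*c + d) a b c d le_rfl

lemma rightWinsFirst_of (a b c d : ℕ) (h : LeftWinsFirst 2 (two c d a b)) :
    RightWinsFirst 2 (two a b c d) :=
  rwf_of_swap h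

lemma rightWinsSecond_of (a b c d : ℕ) (h : LeftWinsSecond 2 (two c d a b)) :
    RightWinsSecond 2 (two a b c d) := fun Q hQ => by
  have h1 : RightMove 2 (two c d a b) Q.swap :=
    rightMove_swap_s6.mpr (show LeftMove 2 (two a b c d) Q from hQ)
  exact rwf_of_swap (h Q.swap h1)

/-- outcomes of `[1^a, 2^b | 1^c, 2^d]` with finger count 2 when
Left has exactly one more hand than Right. -/
theorem fingerTwo_oneMoreHand_left (a b c d : ℕ) (h : a + b = c + d + 1) :
    ((c = 0 ∧ d = 0) → PPos 2 (two a b c d)) ∧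
    ((d = 0 ∧ 0 < b ∧ Odd a) → NPos 2 (two a b c d)) ∧
    ((¬ (c = 0 ∧ d = 0) ∧ ¬ (d = 0 ∧ 0 < b ∧ Odd a)) →
      LPos 2 (two a b c d)) := by
  simp only [Nat.odd_iff]
  refine ⟨?_, ?_, ?_⟩
  · rintro ⟨rfl, rfl⟩
    exact ⟨(main' a b 0 0).2 (by unfold lf; omega),
      rightWinsSecond_of a b 0 0 ((main' 0 0 a b).2 (by unfold lf; omega))⟩
  · rintro ⟨rfl, hb, ha⟩
    exact ⟨(main' a b c 0).1 (by unfold lf; omega),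
      rightWinsFirst_of a b c 0 ((main' c 0 a b).1 (by unfold lf; omega))⟩
  · rintro ⟨h1, h2⟩
    exact ⟨(main' a b c d).1 (by unfold lf; omega),
      (main' a b c d).2 (by unfold lf; omega)⟩

end Octopus
end
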